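/- Let J_m be the Bessel function of the first kind of integer order m, and let f(r) = J_m(r)² · r. If 0 < r < m, then f'(r) > 0 and f''(r) > 0; that is, f is strictly increasing and strictly convex on the interval (0, m). -/

import Mathlib

/-- The Bessel function of the first kind of integer order `m`,
defined by its power series. -/
noncomputable def besselJ (m : ℕ) (x : ℝ) : ℝ :=
  ∑' n : ℕ, ((-1 : ℝ) ^ n / (n.factorial * (n + m).factorial)) * (x / 2) ^ (2 * n + m)

/-!
Write `J = J_m` and `P r = r J'(r)`. Differentiating the power series termwise gives the Bessel
equation in the form `r P'(r) = (m² - r²) J(r)`, and `P r ~ m (r / 2) ^ m / m!` as `r → 0⁺`.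
If `s < m` were the first zero of `P`, then `J' > 0` on `(0, s)` would make `J` positive there,
so `P` would increase on `(0, s]`: impossible. Hence `J, J' > 0` on `(0, m)`, and for
`f r = J(r)² r` the identities `f' = 2 J P + J²` and `r f'' = 2 P² + 2 (m² - r²) J² + 2 J P`
give `f', f'' > 0` there.
-/

open Filter Set Topology
open scoped Nat

section LacunarySeries

variable {a : ℕ → ℝ} {e : ℕ → ℕ}

theorem natCast_mul_pow_sub_one_le (k : ℕ) {r : ℝ} (hr : 0 ≤ r) :
    k * r ^ (k - 1) ≤ (2 * (r + 1)) ^ k := by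
  rw [mul_pow]
  gcongr
  · exact_mod_cast Nat.lt_two_pow_self.le
  · calc r ^ (k - 1) ≤ (r + 1) ^ (k - 1) := by gcongr; linarith
      _ ≤ (r + 1) ^ k := pow_le_pow_right₀ (by linarith) (Nat.sub_le k 1)

theorem mul_mul_natCast_mul_pow_sub_one (c x : ℝ) (k : ℕ) :
    x * (c * k * x ^ (k - 1)) = c * k * x ^ k := by
  rcases eq_or_ne k 0 with rfl | hk
  · simp
  · rw [← mul_pow_sub_one hk x]; ring

theorem summable_mul_natCast_mul_pow_sub_one (hs : ∀ R, Summable fun n => a n * R ^ e n)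
    (R : ℝ) : Summable fun n => a n * e n * R ^ (e n - 1) := by
  refine .of_norm_bounded (hs (2 * (|R| + 1))).abs fun n => ?_
  rw [Real.norm_eq_abs, abs_mul, abs_mul, abs_mul, Nat.abs_cast, abs_pow, abs_pow,
    abs_of_pos (by positivity : (0 : ℝ) < 2 * (|R| + 1)), mul_assoc]
  exact mul_le_mul_of_nonneg_left (natCast_mul_pow_sub_one_le _ (abs_nonneg R)) (abs_nonneg _)

theorem summable_mul_natCast_mul_pow (hs : ∀ R, Summable fun n => a n * R ^ e n) (R : ℝ) :
    Summable fun n => a n * e n * R ^ e n :=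
  ((summable_mul_natCast_mul_pow_sub_one hs R).mul_left R).congr fun _ =>
    mul_mul_natCast_mul_pow_sub_one _ _ _

theorem mul_tsum_mul_natCast_mul_pow_sub_one (a : ℕ → ℝ) (e : ℕ → ℕ) (x : ℝ) :
    x * ∑' n, a n * e n * x ^ (e n - 1) = ∑' n, a n * e n * x ^ e n := by
  rw [← tsum_mul_left]
  exact tsum_congr fun n => mul_mul_natCast_mul_pow_sub_one _ _ _

theorem hasDerivAt_tsum_mul_pow (hs : ∀ R, Summable fun n => a n * R ^ e n) (x : ℝ) :
    HasDerivAt (fun y => ∑' n, a n * y ^ e n) (∑' n, a n * e n * x ^ (e n - 1)) x := by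
  have hx : x ∈ Metric.ball (0 : ℝ) (|x| + 1) := by simp
  refine hasDerivAt_tsum_of_isPreconnected (g := fun n y => a n * y ^ e n)
    (g' := fun n y => a n * e n * y ^ (e n - 1))
    (summable_mul_natCast_mul_pow_sub_one hs (|x| + 1)).abs Metric.isOpen_ball
    (convex_ball _ _).isPreconnected (fun n y _ => ?_) (fun n y hy => ?_) hx (hs x) hx
  · exact ((hasDerivAt_pow (e n) y).const_mul (a n)).congr_deriv (by ring)
  · rw [mem_ball_zero_iff, Real.norm_eq_abs] at hy
    rw [Real.norm_eq_abs, abs_mul, abs_mul (a n * e n), abs_pow, abs_pow,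
      abs_of_pos (by positivity : (0 : ℝ) < |x| + 1)]
    gcongr

theorem continuous_tsum_mul_pow (hs : ∀ R, Summable fun n => a n * R ^ e n) :
    Continuous fun y => ∑' n, a n * y ^ e n :=
  continuous_iff_continuousAt.2 fun x => (hasDerivAt_tsum_mul_pow hs x).continuousAt

end LacunarySeries

section

variable {J : ℝ → ℝ}

theorem pos_of_deriv_pos_of_nonneg (hJ : Continuous J) (hJ0 : 0 ≤ J 0) {t : ℝ}
    (hJ' : ∀ x ∈ Ioo 0 t, 0 < deriv J x) {x : ℝ} (hx : x ∈ Ioc 0 t) : 0 < J x :=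
  hJ0.trans_lt <| strictMonoOn_of_deriv_pos (convex_Icc 0 t) hJ.continuousOn
    (by rwa [interior_Icc]) (left_mem_Icc.2 (hx.1.le.trans hx.2)) (Ioc_subset_Icc_self hx) hx.1

theorem mul_deriv_pos_of_mul_deriv_mul_deriv_eq {q : ℝ → ℝ} {b : ℝ} (hJ : Differentiable ℝ J)
    (hP : Differentiable ℝ fun x => x * deriv J x) (hJ0 : 0 ≤ J 0)
    (hode : ∀ x ∈ Ioo 0 b, x * deriv (fun y => y * deriv J y) x = q x * J x)
    (hq : ∀ x ∈ Ioo 0 b, 0 < q x) (hnear : ∀ᶠ x in 𝓝[>] 0, 0 < x * deriv J x) :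
    ∀ x ∈ Ioo 0 b, 0 < x * deriv J x := by
  set P : ℝ → ℝ := fun x => x * deriv J x
  by_contra! hbad
  obtain ⟨x₀, hx₀, hPx₀⟩ := hbad
  obtain ⟨ε, hε, hεP⟩ := mem_nhdsGT_iff_exists_Ioo_subset.1 hnear
  -- `s` is the first zero of `P`
  set B := {x | x ∈ Ioo 0 b ∧ P x ≤ 0}
  have hB : B.Nonempty := ⟨x₀, hx₀, hPx₀⟩
  have hBbdd : BddBelow B := ⟨0, fun x hx => hx.1.1.le⟩
  set s := sInf B
  have hεs : ε ≤ s := le_csInf hB fun x hx =>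
    not_lt.1 fun hxε => (hεP ⟨hx.1.1, hxε⟩ : 0 < P x).not_ge hx.2
  have hs : 0 < s := hε.trans_le hεs
  have hsb : s < b := (csInf_le hBbdd ⟨hx₀, hPx₀⟩).trans_lt hx₀.2
  have hPs : P s ≤ 0 := closure_minimal (fun x hx => hx.2)
    (isClosed_le hP.continuous continuous_const) (csInf_mem_closure hB hBbdd)
  have hP_pos : ∀ x ∈ Ioo 0 s, 0 < P x := fun x hx =>
    not_le.1 fun h => (csInf_le hBbdd ⟨⟨hx.1, hx.2.trans hsb⟩, h⟩).not_gt hx.2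
  have hJ_pos : ∀ x ∈ Ioo 0 s, 0 < J x := fun x hx =>
    pos_of_deriv_pos_of_nonneg hJ.continuous hJ0
      (fun y hy => pos_of_mul_pos_right (hP_pos y hy) hy.1.le) (Ioo_subset_Ioc_self hx)
  -- on `(0, s)` the equation makes `P` increasing, so `P s > P (s / 2) > 0`
  have hP_mono : StrictMonoOn P (Icc (s / 2) s) := by
    refine strictMonoOn_of_deriv_pos (convex_Icc _ _) hP.continuous.continuousOn fun x hx => ?_
    rw [interior_Icc] at hx
    have hx0 : 0 < x := by linarith [hx.1]
    refine pos_of_mul_pos_right ?_ hx0.le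
    rw [hode x ⟨hx0, hx.2.trans hsb⟩]
    exact mul_pos (hq x ⟨hx0, hx.2.trans hsb⟩) (hJ_pos x ⟨hx0, hx.2⟩)
  have := hP_mono ⟨le_rfl, by linarith⟩ ⟨by linarith, le_rfl⟩ (by linarith)
  linarith [hP_pos (s / 2) ⟨by linarith, by linarith⟩]

theorem deriv_sq_mul_self (hJ : Differentiable ℝ J) :
    deriv (fun r => J r ^ 2 * r) = fun r => 2 * J r * (r * deriv J r) + J r ^ 2 := by
  ext r
  rw [(((hJ r).hasDerivAt.fun_pow 2).fun_mul (hasDerivAt_id' r)).deriv]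
  ring

theorem mul_deriv_deriv_sq_mul_self (hJ : Differentiable ℝ J)
    (hP : Differentiable ℝ fun r => r * deriv J r) (r : ℝ) :
    r * deriv (deriv fun r => J r ^ 2 * r) r =
      2 * (r * deriv J r) ^ 2 + 2 * J r * (r * deriv (fun r => r * deriv J r) r) +
        2 * J r * (r * deriv J r) := by
  rw [deriv_sq_mul_self hJ, ((((hJ r).hasDerivAt.const_mul 2).fun_mul (hP r).hasDerivAt).fun_add
    ((hJ r).hasDerivAt.fun_pow 2)).deriv]
  ring

end

section Bessel

variable (m : ℕ)

noncomputable def besselCoeff (n : ℕ) : ℝ := (-1) ^ n / (n ! * (n + m)! * 2 ^ (2 * n + m))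

theorem besselJ_eq_tsum (x : ℝ) : besselJ m x = ∑' n, besselCoeff m n * x ^ (2 * n + m) :=
  tsum_congr fun n => by rw [besselCoeff, div_pow]; ring

theorem besselCoeff_succ_mul (n : ℕ) :
    besselCoeff m (n + 1) * (((2 * (n + 1) + m : ℕ) : ℝ) ^ 2 - m ^ 2) = -besselCoeff m n := by
  rw [besselCoeff, besselCoeff, Nat.add_right_comm n 1 m, Nat.factorial_succ,
    Nat.factorial_succ]
  push_cast
  field_simp
  ring

theorem summable_besselCoeff_mul_pow (R : ℝ) :
    Summable fun n => besselCoeff m n * R ^ (2 * n) := by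
  refine .of_norm_bounded (Real.summable_pow_div_factorial (R ^ 2)) fun n => ?_
  have hden : (n ! : ℝ) ≤ n ! * (n + m)! * 2 ^ (2 * n + m) := by
    rw [mul_assoc]
    refine le_mul_of_one_le_right (by positivity) (one_le_mul_of_one_le_of_one_le ?_ ?_)
    · exact_mod_cast (n + m).factorial_pos
    · exact one_le_pow₀ one_le_two
  calc ‖besselCoeff m n * R ^ (2 * n)‖ = (R ^ 2) ^ n / (n ! * (n + m)! * 2 ^ (2 * n + m)) := by
        rw [besselCoeff, norm_mul, norm_div, norm_pow, norm_neg, norm_one, one_pow, pow_mul,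
          Real.norm_of_nonneg (by positivity : (0 : ℝ) ≤ (R ^ 2) ^ n),
          Real.norm_of_nonneg (by positivity : (0 : ℝ) ≤ n ! * (n + m)! * 2 ^ (2 * n + m))]
        ring
    _ ≤ (R ^ 2) ^ n / n ! := div_le_div_of_nonneg_left (by positivity) (by positivity) hden

theorem summable_besselCoeff_mul_pow_add (R : ℝ) :
    Summable fun n => besselCoeff m n * R ^ (2 * n + m) :=
  ((summable_besselCoeff_mul_pow m R).mul_left (R ^ m)).congr fun n => by rw [pow_add]; ring

theorem hasDerivAt_besselJ (x : ℝ) :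
    HasDerivAt (besselJ m)
      (∑' n, besselCoeff m n * (2 * n + m : ℕ) * x ^ (2 * n + m - 1)) x := by
  rw [funext (besselJ_eq_tsum m)]
  exact hasDerivAt_tsum_mul_pow (summable_besselCoeff_mul_pow_add m) x

theorem differentiable_besselJ : Differentiable ℝ (besselJ m) :=
  fun x => (hasDerivAt_besselJ m x).differentiableAt

theorem mul_deriv_besselJ (x : ℝ) :
    x * deriv (besselJ m) x = ∑' n, besselCoeff m n * (2 * n + m : ℕ) * x ^ (2 * n + m) := by
  rw [(hasDerivAt_besselJ m x).deriv, mul_tsum_mul_natCast_mul_pow_sub_one]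

theorem differentiable_mul_deriv_besselJ :
    Differentiable ℝ fun x => x * deriv (besselJ m) x := by
  rw [funext (mul_deriv_besselJ m)]
  exact fun x => (hasDerivAt_tsum_mul_pow
    (summable_mul_natCast_mul_pow (summable_besselCoeff_mul_pow_add m)) x).differentiableAt

theorem besselJ_ode (x : ℝ) :
    x * deriv (fun y => y * deriv (besselJ m) y) x = ((m : ℝ) ^ 2 - x ^ 2) * besselJ m x := by
  have hJ := summable_besselCoeff_mul_pow_add m
  have hP := summable_mul_natCast_mul_pow hJ
  rw [funext (mul_deriv_besselJ m), (hasDerivAt_tsum_mul_pow hP x).deriv,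
    mul_tsum_mul_natCast_mul_pow_sub_one, besselJ_eq_tsum]
  set t : ℕ → ℝ := fun n =>
    besselCoeff m n * (((2 * n + m : ℕ) : ℝ) ^ 2 - m ^ 2) * x ^ (2 * n + m)
  have ht : Summable t :=
    ((summable_mul_natCast_mul_pow hP x).sub ((hJ x).mul_left ((m : ℝ) ^ 2))).congr fun n => by ring
  -- the recursion for the coefficients makes `t` a shifted copy of `-x ^ 2 * besselJ m x`
  have htsum : ∑' n, t n = -(x ^ 2 * ∑' n, besselCoeff m n * x ^ (2 * n + m)) := by
    have ht0 : t 0 = 0 := by simp [t]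
    rw [ht.tsum_eq_zero_add, ht0, zero_add, ← tsum_mul_left, ← tsum_neg]
    refine tsum_congr fun n => ?_
    rw [show t (n + 1) = _ * _ * _ from rfl, besselCoeff_succ_mul,
      show 2 * (n + 1) + m = 2 + (2 * n + m) by ring, pow_add]
    ring
  calc ∑' n, besselCoeff m n * (2 * n + m : ℕ) * (2 * n + m : ℕ) * x ^ (2 * n + m)
      = ∑' n, (t n + m ^ 2 * (besselCoeff m n * x ^ (2 * n + m))) :=
        tsum_congr fun n => by ring
    _ = _ := by rw [ht.tsum_add ((hJ x).mul_left _), tsum_mul_left, htsum]; ring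

variable {m}

theorem besselJ_apply_zero (hm : m ≠ 0) : besselJ m 0 = 0 := by
  simp [besselJ, hm]

theorem eventually_mul_deriv_besselJ_pos (hm : m ≠ 0) :
    ∀ᶠ x in 𝓝[>] 0, 0 < x * deriv (besselJ m) x := by
  set H : ℝ → ℝ := fun y => ∑' n, besselCoeff m n * (2 * n + m : ℕ) * y ^ (2 * n)
  have hs : ∀ R, Summable fun n => besselCoeff m n * (2 * n + m : ℕ) * R ^ (2 * n) := fun R =>
    ((summable_mul_natCast_mul_pow (summable_besselCoeff_mul_pow m) R).add
      ((summable_besselCoeff_mul_pow m R).mul_left (m : ℝ))).congr fun n => by push_cast; ring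
  have hH0 : 0 < H 0 := by
    simp only [H]
    rw [tsum_eq_single 0 fun n hn => by simp [hn]]
    simp only [besselCoeff]
    norm_num
    positivity
  -- `x * J_m'(x) = x ^ m * H x`, and `H` is continuous with `H 0 = m / (m! 2 ^ m) > 0`
  have hH : ∀ᶠ x in 𝓝 0, 0 < H x := continuousAt_const.eventually_lt
    (continuous_tsum_mul_pow hs).continuousAt hH0
  filter_upwards [self_mem_nhdsWithin, nhdsWithin_le_nhds hH] with x (hx : 0 < x) hHx
  rw [mul_deriv_besselJ, show ∑' n, besselCoeff m n * (2 * n + m : ℕ) * x ^ (2 * n + m) =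
      x ^ m * H x by rw [← tsum_mul_left]; exact tsum_congr fun n => by rw [pow_add]; ring]
  positivity

theorem besselJ_pos_and_deriv_pos (hm : m ≠ 0) {x : ℝ} (hx : x ∈ Ioo 0 (m : ℝ)) :
    0 < besselJ m x ∧ 0 < deriv (besselJ m) x := by
  have hJ0 : 0 ≤ besselJ m 0 := (besselJ_apply_zero hm).ge
  have hP : ∀ y ∈ Ioo 0 (m : ℝ), 0 < y * deriv (besselJ m) y :=
    mul_deriv_pos_of_mul_deriv_mul_deriv_eq (differentiable_besselJ m)
      (differentiable_mul_deriv_besselJ m) hJ0 (fun y _ => besselJ_ode m y)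
      (fun y hy => by nlinarith [hy.1, hy.2]) (eventually_mul_deriv_besselJ_pos hm)
  have hJ' : ∀ y ∈ Ioo 0 x, 0 < deriv (besselJ m) y := fun y hy =>
    pos_of_mul_pos_right (hP y ⟨hy.1, hy.2.trans hx.2⟩) hy.1.le
  exact ⟨pos_of_deriv_pos_of_nonneg (differentiable_besselJ m).continuous hJ0 hJ' ⟨hx.1, le_rfl⟩,
    pos_of_mul_pos_right (hP x hx) hx.1.le⟩

end Bessel

/-- For `f(r) = J_m(r)² r` and `0 < r < m`, one has `f'(r) > 0`
and `f''(r) > 0`; in particular `f` is strictly increasing and strictly convex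
on `(0, m)`. -/
theorem besselJ_sq_mul_self_strict_mono_convex (m : ℕ) (hm : 1 ≤ m) :
    (∀ r ∈ Set.Ioo (0 : ℝ) (m : ℝ),
        0 < deriv (fun r : ℝ => (besselJ m r) ^ 2 * r) r ∧
        0 < deriv (deriv (fun r : ℝ => (besselJ m r) ^ 2 * r)) r) ∧
    StrictMonoOn (fun r : ℝ => (besselJ m r) ^ 2 * r) (Set.Ioo (0 : ℝ) (m : ℝ)) ∧
    StrictConvexOn ℝ (Set.Ioo (0 : ℝ) (m : ℝ)) (fun r : ℝ => (besselJ m r) ^ 2 * r) := by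
  have hJ := differentiable_besselJ m
  have hd1 : ∀ r ∈ Ioo (0 : ℝ) m, 0 < deriv (fun r => besselJ m r ^ 2 * r) r := by
    intro r hr
    obtain ⟨hJr, hJ'r⟩ := besselJ_pos_and_deriv_pos (by omega) hr
    have hr0 := hr.1
    rw [deriv_sq_mul_self hJ]
    positivity
  have hd2 : ∀ r ∈ Ioo (0 : ℝ) m, 0 < deriv (deriv fun r => besselJ m r ^ 2 * r) r := by
    intro r hr
    obtain ⟨hJr, hJ'r⟩ := besselJ_pos_and_deriv_pos (by omega) hr
    have hq : 0 < (m : ℝ) ^ 2 - r ^ 2 := by nlinarith [hr.1, hr.2]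
    have hr0 := hr.1
    refine pos_of_mul_pos_right ?_ hr.1.le
    rw [mul_deriv_deriv_sq_mul_self hJ (differentiable_mul_deriv_besselJ m), besselJ_ode]
    positivity
  have hcont := ((hJ.continuous.pow 2).mul continuous_id).continuousOn (s := Ioo (0 : ℝ) m)
  exact ⟨fun r hr => ⟨hd1 r hr, hd2 r hr⟩,
    strictMonoOn_of_deriv_pos (convex_Ioo _ _) hcont (by rwa [interior_Ioo]),
    strictConvexOn_of_deriv2_pos' (convex_Ioo _ _) hcont hd2⟩
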